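/- arXiv:1608.05857 — 3 statements merged into one kernel-verified Lean document; each statement's English description precedes it below -/
import Mathlib

section
/- Let 𝒩 be a nest on a separable complex Hilbert space H and Q ∈ 𝒩 with Q ≠ {0} and Q_- = Q. Suppose a, b ∈ Alg 𝒩 and ε > 0 satisfy ‖Q P^⊥ a Q P^⊥‖ ≥ 2ε and ‖Q P^⊥ b Q P^⊥‖ ≥ 2ε for all P ∈ 𝒩 with P < Q. Then there exist orthonormal sequences (e_n) and (f_n) in H such that e_n ⊗ f_n ∈ Alg 𝒩 for every n, and for every strictly increasing sequence (k_n) of natural numbers the sum Σ_n e_{k_n} ⊗ f_{k_n} converges in the strong operator topology to a bounded operator c with ‖Q P^⊥ a c b Q P^⊥‖ ≥ ε² for all P ∈ 𝒩 with P < Q. -/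
open scoped InnerProductSpace

set_option synthInstance.maxHeartbeats 1000000
set_option maxHeartbeats 1000000

/-- A nest on a complex Hilbert space `H`: a family of closed subspaces, totally ordered by
inclusion, containing `{0}` and `H`, closed under intersections and closed linear spans. -/
structure Nest (H : Type*) [NormedAddCommGroup H] [InnerProductSpace ℂ H]
    [CompleteSpace H] where
  carrier : Set (Submodule ℂ H)
  isClosed : ∀ N ∈ carrier, IsClosed (N : Set H)
  total : ∀ N ∈ carrier, ∀ M ∈ carrier, N ≤ M ∨ M ≤ N
  bot_mem : ⊥ ∈ carrier
  top_mem : ⊤ ∈ carrier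
  sInf_mem : ∀ S ⊆ carrier, S.Nonempty → sInf S ∈ carrier
  closedSpan_mem : ∀ S ⊆ carrier, S.Nonempty → (sSup S).topologicalClosure ∈ carrier

variable {H : Type*} [NormedAddCommGroup H] [InnerProductSpace ℂ H] [CompleteSpace H]

/-- The orthogonal projection onto a closed subspace, as an operator `H →L[ℂ] H`. -/
noncomputable def subProj (N : Submodule ℂ H) (hN : IsClosed (N : Set H)) : H →L[ℂ] H :=
  haveI : CompleteSpace N := hN.completeSpace_coe
  N.subtypeL ∘L N.orthogonalProjection

/-- The orthogonal projection onto an element of a nest. -/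
noncomputable def Nest.proj (𝒩 : Nest H) (N : Submodule ℂ H) (hN : N ∈ 𝒩.carrier) :
    H →L[ℂ] H :=
  subProj N (𝒩.isClosed N hN)

/-- The nest algebra of all bounded operators leaving every element of the nest invariant. -/
def nestAlgebra (𝒩 : Nest H) : Subalgebra ℂ (H →L[ℂ] H) where
  carrier := {T | ∀ N ∈ 𝒩.carrier, ∀ x ∈ N, T x ∈ N}
  mul_mem' := fun hT hS N hN x hx => hT N hN _ (hS N hN x hx)
  one_mem' := fun N _ x hx => hx
  add_mem' := fun hT hS N hN x hx => N.add_mem (hT N hN x hx) (hS N hN x hx)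
  algebraMap_mem' := fun r N _ x hx => by
    simpa [Algebra.algebraMap_eq_smul_one] using N.smul_mem r hx

/-- `Q₋`: the closed span of the elements of the nest strictly below `Q`. -/
def Nest.pred (𝒩 : Nest H) (Q : Submodule ℂ H) : Submodule ℂ H :=
  (sSup {P | P ∈ 𝒩.carrier ∧ P < Q}).topologicalClosure

/-- `Q₊`: the intersection of the elements of the nest strictly above `Q`. -/
def Nest.succ (𝒩 : Nest H) (Q : Submodule ℂ H) : Submodule ℂ H :=
  sInf {P | P ∈ 𝒩.carrier ∧ Q < P}

/-- The projection onto `Q₋`. -/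
noncomputable def Nest.predProj (𝒩 : Nest H) (Q : Submodule ℂ H) : H →L[ℂ] H :=
  subProj (𝒩.pred Q) (Submodule.isClosed_topologicalClosure _)

/-- The rank one operator `e ⊗ f : h ↦ ⟨h, e⟩ f` (inner product linear in `h`). -/
noncomputable def rankOne (e f : H) : H →L[ℂ] H :=
  (ContinuousLinearMap.toSpanSingleton ℂ f).comp (innerSL ℂ e)

/-- The Jacobson radical of the nest algebra, viewed as a set of operators on `H`. -/
def nestRadical (𝒩 : Nest H) : Set (H →L[ℂ] H) :=
  (fun a : nestAlgebra 𝒩 => (a : H →L[ℂ] H)) ''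
    {a | a ∈ (⊥ : TwoSidedIdeal (nestAlgebra 𝒩)).jacobson}

/-- `K(𝒩)`: the compact operators belonging to the nest algebra. -/
def nestCompacts (𝒩 : Nest H) : Set (H →L[ℂ] H) :=
  {T | T ∈ nestAlgebra 𝒩 ∧ IsCompactOperator T}

/-- `K(𝒩) + Rad(Alg 𝒩)` as a set of operators. -/
def nestKplusRad (𝒩 : Nest H) : Set (H →L[ℂ] H) :=
  {T | ∃ k ∈ nestCompacts 𝒩, ∃ r ∈ nestRadical 𝒩, T = k + r}

/-!
Write `E_P = Q P^⊥`. Because `Q₋ = Q`, the projections onto the elements `P < Q` of the nest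
converge strongly to `Q`, and by separability some sequence of them is cofinal. Inductively
choose `P₀ ≤ P₁ ≤ ⋯ < Q` cofinal below `Q`, unit vectors `f n ∈ P (n+1) ⊖ P n` with
`‖(P n)^⊥ a f n‖ > 2ε - δ`, and test vectors `x n ∈ Q ⊖ P n`, `‖x n‖ ≤ 1`, for which
`(P n)^⊥ b x n` lies within `δ` of a vector `g n ∈ P (n+1) ⊖ P n` of norm `> 2ε - δ`.
Normalising `g (n+1)` gives `e n`, one block above `f n`, so `e n ⊗ f n ∈ Alg 𝒩`.
For `c = ∑ e (k n) ⊗ f (k n)` and `P < Q`, take `n = k m` with `P ≤ P n` and test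
`E_P a c b E_P` on `x (n+1)`: modulo `P n` the only surviving term of `c b x (n+1)` is
`‖g (n+1)‖ f n`, up to an error of norm `δ`, so `‖E_P a c b E_P‖ ≥ (2ε - δ)² - ‖a‖ δ ≥ ε²`.
-/

open Filter Topology Submodule

section

omit [CompleteSpace H]

namespace Submodule

variable {K L : Submodule ℂ H} [L.HasOrthogonalProjection]

lemma starProjection_apply_mem_orthogonal_of_le (hKL : K ≤ L) {v : H} (hv : v ∈ Kᗮ) :
    L.starProjection v ∈ Kᗮ := by
  refine (mem_orthogonal _ _).2 fun w hw => ?_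
  rw [← inner_starProjection_left_eq_right, starProjection_eq_self_iff.2 (hKL hw)]
  exact inner_right_of_mem_orthogonal hw hv

variable [K.HasOrthogonalProjection]

lemma norm_sub_starProjection_le_of_le_of_mem (hKL : K ≤ L) {w : H} (hw : w ∈ L)
    (v : H) : ‖v - L.starProjection v‖ ≤ ‖(w + v) - K.starProjection (w + v)‖ := by
  rw [← add_sub_add_left_eq_sub v (L.starProjection v) w, ← starProjection_eq_self_iff.2 hw,
    ← map_add, starProjection_eq_self_iff.2 hw, starProjection_minimal]
  exact ciInf_le ⟨0, Set.forall_mem_range.2 fun _ => norm_nonneg _⟩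
    (⟨K.starProjection (w + v), hKL (starProjection_apply_mem K _)⟩ : L)

lemma starProjection_mul_one_sub_apply_of_mem (hKL : K ≤ L) {v : H} (hv : v ∈ L) :
    (L.starProjection * (1 - K.starProjection)) v = v - K.starProjection v := by
  simp [starProjection_eq_self_iff.2 hv,
    starProjection_eq_self_iff.2 (hKL (starProjection_apply_mem K v))]

lemma starProjection_mul_one_sub_apply_mem (hKL : K ≤ L) (v : H) :
    (L.starProjection * (1 - K.starProjection)) v ∈ L ⊓ Kᗮ :=
  ⟨starProjection_apply_mem L _,
    starProjection_apply_mem_orthogonal_of_le hKL (sub_starProjection_mem_orthogonal v)⟩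

lemma norm_starProjection_mul_one_sub_apply_le (v : H) :
    ‖(L.starProjection * (1 - K.starProjection)) v‖ ≤ ‖v‖ := by
  rw [← starProjection_orthogonal', mul_apply_eq_comp]
  exact (norm_starProjection_apply_le L _).trans (norm_starProjection_apply_le Kᗮ v)

lemma exists_lt_norm_sub_starProjection (hKL : K ≤ L) {T : H →L[ℂ] H}
    (hT : ∀ v ∈ L, T v ∈ L) {η : ℝ}
    (hη : η < ‖L.starProjection * (1 - K.starProjection) * T *
      (L.starProjection * (1 - K.starProjection))‖) :
    ∃ x ∈ L ⊓ Kᗮ, ‖x‖ ≤ 1 ∧ η < ‖T x - K.starProjection (T x)‖ := by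
  obtain ⟨v, hv, hηv⟩ := ContinuousLinearMap.exists_lt_apply_of_lt_opNorm _ hη
  set x := (L.starProjection * (1 - K.starProjection)) v
  have hx : x ∈ L ⊓ Kᗮ := starProjection_mul_one_sub_apply_mem hKL v
  refine ⟨x, hx, (norm_starProjection_mul_one_sub_apply_le v).trans hv.le, ?_⟩
  rwa [mul_apply_eq_comp, mul_apply_eq_comp,
    starProjection_mul_one_sub_apply_of_mem hKL (hT x hx.1)] at hηv

end Submodule

lemma orthonormal_of_mem_inf_orthogonal {P : ℕ → Submodule ℂ H} (hP : Monotone P)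
    {v : ℕ → H} (hv : ∀ n, v n ∈ P (n + 1) ⊓ (P n)ᗮ) (hv1 : ∀ n, ‖v n‖ = 1) :
    Orthonormal ℂ v := by
  refine ⟨hv1, fun i j hij => ?_⟩
  rcases hij.lt_or_gt with h | h
  · exact inner_right_of_mem_orthogonal (hP h (hv i).1) (hv j).2
  · exact inner_left_of_mem_orthogonal (hP h (hv j).1) (hv i).2

lemma lt_norm_apply_normalize {T : H →L[ℂ] H} {u : H} {η : ℝ} (hη : 0 ≤ η)
    (hu : ‖u‖ ≤ 1) (h : η < ‖T u‖) : η < ‖T (NormedSpace.normalize u)‖ := by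
  have hu0 : 0 < ‖u‖ := norm_pos_iff.2 fun hu0 => by simp [hu0] at h; linarith
  rw [NormedSpace.normalize, ContinuousLinearMap.map_smul_of_tower, norm_smul, norm_inv, norm_norm]
  exact h.trans_le (le_mul_of_one_le_left (norm_nonneg _) (one_le_inv₀ hu0 |>.2 hu))

lemma rankOne_apply (e f v : H) : rankOne e f v = ⟪e, v⟫_ℂ • f := rfl

end

section RankOneSum

variable {e f : ℕ → H}

lemma Orthonormal.summable_inner_smul (he : Orthonormal ℂ e) (hf : Orthonormal ℂ f) (v : H) :
    Summable fun n => ⟪e n, v⟫_ℂ • f n := by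
  have := (hf.orthogonalFamily.summable_iff_norm_sq_summable fun n => ⟪e n, v⟫_ℂ).2
    (by simpa using he.inner_products_summable v)
  simpa using this

noncomputable def rankOneSum (he : Orthonormal ℂ e) (hf : Orthonormal ℂ f) : H →L[ℂ] H :=
  continuousLinearMapOfTendsto (fun N => ∑ n ∈ Finset.range N, rankOne (e n) (f n))
    (f := fun v => ∑' n, ⟪e n, v⟫_ℂ • f n) <| tendsto_pi_nhds.2 fun v => by
      simpa [rankOne_apply] using (he.summable_inner_smul hf v).hasSum.tendsto_sum_nat

variable (he : Orthonormal ℂ e) (hf : Orthonormal ℂ f)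

lemma hasSum_rankOneSum (v : H) :
    HasSum (fun n => rankOne (e n) (f n) v) (rankOneSum he hf v) :=
  (he.summable_inner_smul hf v).hasSum

lemma norm_rankOneSum_apply_le (v : H) : ‖rankOneSum he hf v‖ ≤ ‖v‖ := by
  refine le_of_tendsto' ((continuous_norm.tendsto _).comp
    (hasSum_rankOneSum he hf v).tendsto_sum_nat) fun N => ?_
  refine (sq_le_sq₀ (norm_nonneg _) (norm_nonneg _)).1 ?_
  have hnorm := hf.orthogonalFamily.norm_sum (fun n => ⟪e n, v⟫_ℂ) (Finset.range N)
  simp only [LinearIsometry.toSpanSingleton_apply] at hnorm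
  simpa only [rankOne_apply, hnorm] using he.sum_inner_products_le v

lemma rankOneSum_apply_self (i : ℕ) : rankOneSum he hf (e i) = f i := by
  refine (hasSum_rankOneSum he hf (e i)).unique ?_
  convert hasSum_ite_eq i (f i) using 1
  ext n
  rw [rankOne_apply, orthonormal_iff_ite.1 he]
  split_ifs <;> simp_all [eq_comm]

lemma rankOneSum_apply_mem {K : Submodule ℂ H} (hK : IsClosed (K : Set H)) {v : H}
    (h : ∀ n, rankOne (e n) (f n) v ∈ K) : rankOneSum he hf v ∈ K :=
  hK.mem_of_tendsto (hasSum_rankOneSum he hf v).tendsto_sum_nat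
    (Eventually.of_forall fun _ => K.sum_mem fun n _ => h n)

end RankOneSum

namespace Nest

variable {𝒩 : Nest H} {Q : Submodule ℂ H}

lemma rankOne_mem_nestAlgebra {M : Submodule ℂ H} (hM : M ∈ 𝒩.carrier) {e f : H}
    (he : e ∈ Mᗮ) (hf : f ∈ M) : rankOne e f ∈ nestAlgebra 𝒩 := by
  intro N hN v hv
  rw [rankOne_apply]
  rcases 𝒩.total N hN M hM with hNM | hMN
  · rw [inner_left_of_mem_orthogonal (hNM hv) he, zero_smul]
    exact N.zero_mem
  · exact N.smul_mem _ (hMN hf)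

variable (𝒩) in
abbrev Below (Q : Submodule ℂ H) : Type _ := {P : Submodule ℂ H // P ∈ 𝒩.carrier ∧ P < Q}

instance : SemilatticeSup (𝒩.Below Q) :=
  Subtype.semilatticeSup fun P₁ P₂ h₁ h₂ => by
    rcases 𝒩.total P₁ h₁.1 P₂ h₂.1 with h | h
    · rwa [sup_eq_right.2 h]
    · rwa [sup_eq_left.2 h]

instance (P : 𝒩.Below Q) : P.1.HasOrthogonalProjection :=
  haveI := (𝒩.isClosed _ P.2.1).completeSpace_coe
  inferInstance

lemma Below.le_total (P P' : 𝒩.Below Q) : P ≤ P' ∨ P' ≤ P :=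
  𝒩.total _ P.2.1 _ P'.2.1

lemma tendsto_starProjection_atTop (hQpred : 𝒩.pred Q = Q) {x : H} (hx : x ∈ Q) :
    Tendsto (fun P : 𝒩.Below Q => P.1.starProjection x) atTop (𝓝 x) := by
  have hsup : (⨆ P : 𝒩.Below Q, P.1).topologicalClosure = Q := by
    refine Eq.trans ?_ hQpred
    rw [Nest.pred, sSup_eq_iSup']
    rfl
  have hlim := starProjection_tendsto_closure_iSup
    (fun P : 𝒩.Below Q => P.1) (fun _ _ h => h) x
  rwa [starProjection_eq_self_iff.2 (by rwa [hsup])] at hlim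

lemma exists_cofinal_seq [TopologicalSpace.SeparableSpace H] [Nonempty (𝒩.Below Q)]
    (hQpred : 𝒩.pred Q = Q) : ∃ C : ℕ → 𝒩.Below Q, ∀ P, ∃ n, P ≤ C n := by
  obtain ⟨z, hz⟩ := TopologicalSpace.exists_dense_seq Q
  have happrox : ∀ i m : ℕ, ∃ P : 𝒩.Below Q,
      dist (P.1.starProjection (z i)) (z i) < 1 / (m + 1) := fun i m =>
    ((tendsto_starProjection_atTop hQpred (z i).2).eventually
      (Metric.ball_mem_nhds _ (by positivity))).exists
  choose D hD using happrox
  refine ⟨fun n => D n.unpair.1 n.unpair.2, fun P => ?_⟩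
  by_contra! hP
  have hDP : ∀ i m, D i m ≤ P := fun i m =>
    (Below.le_total P (D i m)).resolve_left (by simpa using hP (Nat.pair i m))
  have hzP : ∀ i, (z i : H) ∈ P.1 := fun i => by
    rw [← SetLike.mem_coe, ← (𝒩.isClosed _ P.2.1).closure_eq, Metric.mem_closure_iff]
    intro r hr
    obtain ⟨m, hm⟩ := exists_nat_one_div_lt hr
    exact ⟨_, hDP i m (starProjection_apply_mem _ _),
      (dist_comm _ _).trans_lt ((hD i m).trans hm)⟩
  have hQP : Q ≤ P := fun x hx =>
    hz.induction_on (p := fun y : Q => (y : H) ∈ P.1) ⟨x, hx⟩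
      ((𝒩.isClosed _ P.2.1).preimage continuous_subtype_val) hzP
  exact P.2.2.not_ge hQP

end Nest

structure BlockStep (Q : Submodule ℂ H) (a b : H →L[ℂ] H) (η δ : ℝ)
    (P P' : Submodule ℂ H) [P.HasOrthogonalProjection] where
  f : H
  f_mem : f ∈ P' ⊓ Pᗮ
  norm_f : ‖f‖ = 1
  lt_norm_a_f : η < ‖a f - P.starProjection (a f)‖
  x : H
  x_mem : x ∈ Q ⊓ Pᗮ
  norm_x_le : ‖x‖ ≤ 1
  g : H
  g_mem : g ∈ P' ⊓ Pᗮ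
  lt_norm_g : η < ‖g‖
  norm_sub_g_le : ‖b x - P.starProjection (b x) - g‖ ≤ δ

namespace Nest

variable {𝒩 : Nest H} {Q : Submodule ℂ H} [Q.HasOrthogonalProjection] {a b : H →L[ℂ] H}
  {η δ : ℝ}

lemma eventually_exists_f (hQpred : 𝒩.pred Q = Q) (ha : ∀ v ∈ Q, a v ∈ Q) (hη : 0 ≤ η)
    (P : 𝒩.Below Q)
    (hna : η < ‖Q.starProjection * (1 - P.1.starProjection) * a *
      (Q.starProjection * (1 - P.1.starProjection))‖) :
    ∀ᶠ P' : 𝒩.Below Q in atTop, ∃ f ∈ P'.1 ⊓ P.1ᗮ,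
      ‖f‖ = 1 ∧ η < ‖a f - P.1.starProjection (a f)‖ := by
  obtain ⟨s, hs, hs1, hsa⟩ := exists_lt_norm_sub_starProjection P.2.2.le ha hna
  have hT : Continuous fun v => ‖((1 - P.1.starProjection) * a) v‖ := by fun_prop
  filter_upwards [eventually_ge_atTop P, ((hT.tendsto s).comp
    (tendsto_starProjection_atTop hQpred hs.1)).eventually (lt_mem_nhds (by simpa using hsa))]
    with P' hPP' hP'
  set u := P'.1.starProjection s
  replace hP' : η < ‖((1 - P.1.starProjection) * a) u‖ := hP'
  have hu : u ∈ P'.1 ⊓ P.1ᗮ :=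
    ⟨starProjection_apply_mem _ _, starProjection_apply_mem_orthogonal_of_le hPP' hs.2⟩
  have hu0 : u ≠ 0 := fun hu0 => by
    rw [hu0, map_zero, norm_zero] at hP'
    linarith
  exact ⟨NormedSpace.normalize u, ⟨smul_of_tower_mem _ _ hu.1, smul_of_tower_mem _ _ hu.2⟩,
    NormedSpace.norm_normalize hu0,
    by simpa using lt_norm_apply_normalize hη ((norm_starProjection_apply_le _ s).trans hs1) hP'⟩

lemma eventually_exists_x_g (hQpred : 𝒩.pred Q = Q) (hb : ∀ v ∈ Q, b v ∈ Q) (hδ : 0 < δ)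
    (P : 𝒩.Below Q)
    (hnb : η < ‖Q.starProjection * (1 - P.1.starProjection) * b *
      (Q.starProjection * (1 - P.1.starProjection))‖) :
    ∀ᶠ P' : 𝒩.Below Q in atTop, ∃ x ∈ Q ⊓ P.1ᗮ, ‖x‖ ≤ 1 ∧
      ∃ g ∈ P'.1 ⊓ P.1ᗮ, η < ‖g‖ ∧
        ‖b x - P.1.starProjection (b x) - g‖ ≤ δ := by
  obtain ⟨x, hx, hx1, hxb⟩ := exists_lt_norm_sub_starProjection P.2.2.le hb hnb
  set y := b x - P.1.starProjection (b x)
  have hlim := tendsto_starProjection_atTop hQpred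
    (Q.sub_mem (hb x hx.1) (P.2.2.le (starProjection_apply_mem _ _)) : y ∈ Q)
  filter_upwards [eventually_ge_atTop P, hlim.norm.eventually (lt_mem_nhds hxb),
    hlim.eventually (Metric.closedBall_mem_nhds y hδ)] with P' hPP' hgy hdy
  refine ⟨x, hx, hx1, P'.1.starProjection y, ⟨starProjection_apply_mem _ _,
    starProjection_apply_mem_orthogonal_of_le hPP' (sub_starProjection_mem_orthogonal _)⟩,
    hgy, ?_⟩
  rwa [dist_eq_norm'] at hdy

lemma exists_blockStep (hQpred : 𝒩.pred Q = Q) (ha : ∀ v ∈ Q, a v ∈ Q)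
    (hb : ∀ v ∈ Q, b v ∈ Q) (hη : 0 ≤ η) (hδ : 0 < δ) (P R : 𝒩.Below Q)
    (hna : η < ‖Q.starProjection * (1 - P.1.starProjection) * a *
      (Q.starProjection * (1 - P.1.starProjection))‖)
    (hnb : η < ‖Q.starProjection * (1 - P.1.starProjection) * b *
      (Q.starProjection * (1 - P.1.starProjection))‖) :
    ∃ P' : 𝒩.Below Q, P ≤ P' ∧ R ≤ P' ∧ Nonempty (BlockStep Q a b η δ P P') := by
  have : Nonempty (𝒩.Below Q) := ⟨P⟩
  obtain ⟨P', hPP', hRP', ⟨f, hf, hf1, hfa⟩, ⟨x, hx, hx1, g, hg, hg1, hgx⟩⟩ :=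
    ((eventually_ge_atTop P).and ((eventually_ge_atTop R).and
      ((eventually_exists_f hQpred ha hη P hna).and
        (eventually_exists_x_g hQpred hb hδ P hnb)))).exists
  exact ⟨P', hPP', hRP', ⟨⟨f, hf, hf1, hfa, x, hx, hx1, g, hg, hg1, hgx⟩⟩⟩

structure Blocks (𝒩 : Nest H) (Q : Submodule ℂ H) (a b : H →L[ℂ] H) (η δ : ℝ) where
  P : ℕ → 𝒩.Below Q
  mono : Monotone P
  cofinal : ∀ R, ∃ n, R ≤ P n
  step n : BlockStep Q a b η δ (P n) (P (n + 1))

lemma exists_blocks [TopologicalSpace.SeparableSpace H] [Nonempty (𝒩.Below Q)]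
    (hQpred : 𝒩.pred Q = Q) (ha : ∀ v ∈ Q, a v ∈ Q) (hb : ∀ v ∈ Q, b v ∈ Q)
    (hη : 0 ≤ η) (hδ : 0 < δ)
    (hna : ∀ P : 𝒩.Below Q, η < ‖Q.starProjection * (1 - P.1.starProjection) * a *
      (Q.starProjection * (1 - P.1.starProjection))‖)
    (hnb : ∀ P : 𝒩.Below Q, η < ‖Q.starProjection * (1 - P.1.starProjection) * b *
      (Q.starProjection * (1 - P.1.starProjection))‖) :
    Nonempty (Blocks 𝒩 Q a b η δ) := by
  obtain ⟨C, hC⟩ := exists_cofinal_seq (𝒩 := 𝒩) hQpred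
  choose next hle hCle hstep using fun (n : ℕ) (P : 𝒩.Below Q) =>
    exists_blockStep hQpred ha hb hη hδ P (C n) (hna P) (hnb P)
  let P : ℕ → 𝒩.Below Q := fun n => Nat.rec (C 0) next n
  exact ⟨{ P := P
           mono := monotone_nat_of_le_succ fun n => hle n (P n)
           cofinal := fun R => (hC R).elim fun n hn => ⟨n + 1, hn.trans (hCle n (P n))⟩
           step := fun n => (hstep n (P n)).some }⟩

end Nest

namespace Nest.Blocks

variable {𝒩 : Nest H} {Q : Submodule ℂ H} {a b : H →L[ℂ] H} {η δ : ℝ}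
  (B : Blocks 𝒩 Q a b η δ)

noncomputable def e (n : ℕ) : H := NormedSpace.normalize (B.step (n + 1)).g

lemma e_mem (n : ℕ) : B.e n ∈ (B.P (n + 2)).1 ⊓ (B.P (n + 1)).1ᗮ :=
  ⟨smul_of_tower_mem _ _ (B.step (n + 1)).g_mem.1,
    smul_of_tower_mem _ _ (B.step (n + 1)).g_mem.2⟩

lemma orthonormal_e (hη : 0 ≤ η) : Orthonormal ℂ B.e :=
  orthonormal_of_mem_inf_orthogonal (P := fun n => (B.P (n + 1)).1)
    (fun _ _ h => B.mono (Nat.succ_le_succ h)) B.e_mem fun n =>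
    NormedSpace.norm_normalize (norm_pos_iff.1 (hη.trans_lt (B.step (n + 1)).lt_norm_g))

lemma orthonormal_f : Orthonormal ℂ fun n => (B.step n).f :=
  orthonormal_of_mem_inf_orthogonal (fun _ _ h => B.mono h) (fun n => (B.step n).f_mem)
    fun n => (B.step n).norm_f

lemma rankOne_mem_nestAlgebra (n : ℕ) : rankOne (B.e n) (B.step n).f ∈ nestAlgebra 𝒩 :=
  𝒩.rankOne_mem_nestAlgebra (B.P (n + 1)).2.1 (B.e_mem n).2 (B.step n).f_mem.1

variable (hη : 0 ≤ η) {k : ℕ → ℕ} (hk : StrictMono k)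

noncomputable def sumAlong : H →L[ℂ] H :=
  rankOneSum ((B.orthonormal_e hη).comp k hk.injective) (B.orthonormal_f.comp k hk.injective)

lemma sumAlong_apply_mem (m : ℕ) {v : H} (hv : v ∈ (B.P (k m + 1)).1) :
    B.sumAlong hη hk v ∈ (B.P (k m)).1 := by
  refine rankOneSum_apply_mem _ _ (𝒩.isClosed _ (B.P (k m)).2.1) fun j => ?_
  rcases lt_or_ge j m with hj | hj
  · exact smul_mem _ _ (B.mono (hk hj) (B.step (k j)).f_mem.1)
  · rw [Function.comp_apply, rankOne_apply,
      inner_left_of_mem_orthogonal (B.mono (Nat.succ_le_succ (hk.monotone hj)) hv)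
        (B.e_mem (k j)).2, zero_smul]
    exact zero_mem _

lemma sumAlong_apply_g (m : ℕ) :
    B.sumAlong hη hk (B.step (k m + 1)).g = ‖(B.step (k m + 1)).g‖ • (B.step (k m)).f := by
  conv_lhs => rw [← NormedSpace.norm_smul_normalize (B.step (k m + 1)).g]
  rw [ContinuousLinearMap.map_smul_of_tower]
  exact congrArg _ (rankOneSum_apply_self _ _ m)

lemma exists_sumAlong_apply_b_x (m : ℕ) :
    ∃ w ∈ (B.P (k m)).1, ∃ r : H, ‖r‖ ≤ δ ∧ B.sumAlong hη hk (b (B.step (k m + 1)).x) =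
      w + ‖(B.step (k m + 1)).g‖ • (B.step (k m)).f + r := by
  set S := B.step (k m + 1)
  set u := (B.P (k m + 1)).1.starProjection (b S.x)
  refine ⟨_, B.sumAlong_apply_mem hη hk m (starProjection_apply_mem _ (b S.x)),
    B.sumAlong hη hk (b S.x - u - S.g),
    (norm_rankOneSum_apply_le _ _ _).trans S.norm_sub_g_le, ?_⟩
  rw [← B.sumAlong_apply_g hη hk m, ← map_add, ← map_add]
  congr 1
  abel

theorem sq_sub_le_norm (ha : a ∈ nestAlgebra 𝒩) (hQ : Q ∈ 𝒩.carrier)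
    [Q.HasOrthogonalProjection] (P : 𝒩.Below Q) :
    η ^ 2 - ‖a‖ * δ ≤ ‖Q.starProjection * (1 - P.1.starProjection) * a *
      B.sumAlong hη hk * b * (Q.starProjection * (1 - P.1.starProjection))‖ := by
  set E := Q.starProjection * (1 - P.1.starProjection)
  obtain ⟨m, hm⟩ := B.cofinal P
  obtain ⟨w, hw, r, hr, hcbx⟩ := B.exists_sumAlong_apply_b_x hη hk m
  set n := k m
  have hPn : P ≤ B.P n := hm.trans (B.mono hk.le_apply)
  set S := B.step (n + 1)
  set f := (B.step n).f
  have haw : a w ∈ (B.P n).1 := ha _ (B.P n).2.1 _ hw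
  set z := a w + ‖S.g‖ • a f
  have hz : z ∈ Q := Q.add_mem ((B.P n).2.2.le haw)
    (Q.smul_of_tower_mem _ (ha Q hQ _ ((B.P (n + 1)).2.2.le (B.step n).f_mem.1)))
  have hEx : E S.x = S.x := by
    rw [starProjection_mul_one_sub_apply_of_mem P.2.2.le S.x_mem.1,
      (starProjection_apply_eq_zero_iff _).2
        (orthogonal_le (hPn.trans (B.mono n.le_succ)) S.x_mem.2), sub_zero]
  have hTx : (E * a * B.sumAlong hη hk * b * E) S.x = E z + E (a r) := by
    simp only [mul_apply_eq_comp, hEx, hcbx, map_add, ContinuousLinearMap.map_smul_of_tower, z]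
  have hEz : η ^ 2 ≤ ‖E z‖ := by
    rw [starProjection_mul_one_sub_apply_of_mem P.2.2.le hz]
    calc η ^ 2 ≤ ‖S.g‖ * ‖a f - (B.P n).1.starProjection (a f)‖ := by
          rw [sq]
          exact mul_le_mul S.lt_norm_g.le (B.step n).lt_norm_a_f.le hη (norm_nonneg _)
      _ = ‖‖S.g‖ • a f - (B.P n).1.starProjection (‖S.g‖ • a f)‖ := by
          rw [ContinuousLinearMap.map_smul_of_tower, ← smul_sub, norm_smul, norm_norm]
      _ ≤ ‖z - P.1.starProjection z‖ :=
          norm_sub_starProjection_le_of_le_of_mem hPn haw _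
  have hEr : ‖E (a r)‖ ≤ ‖a‖ * δ :=
    (norm_starProjection_mul_one_sub_apply_le _).trans
      ((a.le_opNorm r).trans (mul_le_mul_of_nonneg_left hr (norm_nonneg a)))
  calc η ^ 2 - ‖a‖ * δ ≤ ‖E z + E (a r)‖ := by
        linarith [norm_le_add_norm_add (E z) (E (a r))]
    _ = ‖(E * a * B.sumAlong hη hk * b * E) S.x‖ := by rw [hTx]
    _ ≤ ‖E * a * B.sumAlong hη hk * b * E‖ := (ContinuousLinearMap.le_opNorm _ _).trans
      (mul_le_of_le_one_right (norm_nonneg _) S.norm_x_le)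

end Nest.Blocks

/-- Lemma 2 (Lemma `cont`) of the paper. -/
theorem nest_cont_lemma [TopologicalSpace.SeparableSpace H] (𝒩 : Nest H)
    (Q : Submodule ℂ H) (hQ : Q ∈ 𝒩.carrier) (hQbot : Q ≠ ⊥) (hQpred : 𝒩.pred Q = Q)
    (a b : H →L[ℂ] H) (ha : a ∈ nestAlgebra 𝒩) (hb : b ∈ nestAlgebra 𝒩)
    (ε : ℝ) (hε : 0 < ε)
    (hna : ∀ P, ∀ hP : P ∈ 𝒩.carrier, P < Q →
      2 * ε ≤ ‖(𝒩.proj Q hQ * (1 - 𝒩.proj P hP)) * a * (𝒩.proj Q hQ * (1 - 𝒩.proj P hP))‖)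
    (hnb : ∀ P, ∀ hP : P ∈ 𝒩.carrier, P < Q →
      2 * ε ≤ ‖(𝒩.proj Q hQ * (1 - 𝒩.proj P hP)) * b * (𝒩.proj Q hQ * (1 - 𝒩.proj P hP))‖) :
    ∃ e f : ℕ → H, Orthonormal ℂ e ∧ Orthonormal ℂ f ∧
      (∀ n, rankOne (e n) (f n) ∈ nestAlgebra 𝒩) ∧
      ∀ k : ℕ → ℕ, StrictMono k → ∃ c : H →L[ℂ] H,
        (∀ h : H,
          Filter.Tendsto (fun N => ∑ n ∈ Finset.range N, rankOne (e (k n)) (f (k n)) h)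
            Filter.atTop (nhds (c h))) ∧
        ∀ P, ∀ hP : P ∈ 𝒩.carrier, P < Q →
          ε ^ 2 ≤ ‖(𝒩.proj Q hQ * (1 - 𝒩.proj P hP)) * a * c * b *
              (𝒩.proj Q hQ * (1 - 𝒩.proj P hP))‖ := by
  have := (𝒩.isClosed Q hQ).completeSpace_coe
  have : Nonempty (𝒩.Below Q) := ⟨⟨⊥, 𝒩.bot_mem, bot_lt_iff_ne_bot.2 hQbot⟩⟩
  set δ := ε ^ 2 / (4 * ε + ‖a‖)
  have hδ : 0 < δ := by positivity
  have hδa : δ * (4 * ε + ‖a‖) = ε ^ 2 := div_mul_cancel₀ _ (by positivity)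
  have hη : 0 ≤ 2 * ε - δ := by nlinarith [norm_nonneg a]
  obtain ⟨B⟩ := Nest.exists_blocks hQpred (ha Q hQ) (hb Q hQ) hη hδ
    (fun P => (sub_lt_self _ hδ).trans_le (hna P.1 P.2.1 P.2.2))
    (fun P => (sub_lt_self _ hδ).trans_le (hnb P.1 P.2.1 P.2.2))
  refine ⟨B.e, fun n => (B.step n).f, B.orthonormal_e hη, B.orthonormal_f,
    B.rankOne_mem_nestAlgebra, fun k hk => ⟨B.sumAlong hη hk,
      fun h => (hasSum_rankOneSum _ _ h).tendsto_sum_nat, fun P hP hPQ => ?_⟩⟩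
  -- `δ` is chosen so that `(2ε - δ)² - ‖a‖ δ = 3ε² + δ²`
  calc ε ^ 2 ≤ (2 * ε - δ) ^ 2 - ‖a‖ * δ := by nlinarith
    _ ≤ _ := B.sq_sub_le_norm hη hk ha hQ ⟨P, hP, hPQ⟩
end

section
/- Let 𝒩 be a nest on a separable complex Hilbert space H and let a ∈ Alg 𝒩. Assume that for every Q ∈ 𝒩 with Q ≠ {0} and Q_- = Q one has inf{‖Q P^⊥ a Q P^⊥‖ : P ∈ 𝒩, P < Q} = 0, and that for every Q ∈ 𝒩 with Q ≠ H and Q_+ = Q one has inf{‖Q^⊥ P a Q^⊥ P‖ : P ∈ 𝒩, P > Q} = 0. Then for every ε > 0 the set {Q ∈ 𝒩 : ‖Q Q_-^⊥ a Q Q_-^⊥‖ > ε} is finite. -/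
open scoped InnerProductSpace

set_option synthInstance.maxHeartbeats 1000000
set_option maxHeartbeats 1000000

variable {H : Type*} [NormedAddCommGroup H] [InnerProductSpace ℂ H] [CompleteSpace H]

/-- The projection `Q Q₋^⊥` onto the atom determined by `Q`. -/
noncomputable def Nest.atomProj (𝒩 : Nest H) (Q : Submodule ℂ H) (hQ : Q ∈ 𝒩.carrier) :
    H →L[ℂ] H :=
  𝒩.proj Q hQ * (1 - 𝒩.predProj Q)

/-!
If infinitely many atoms had compression norm `> ε`, the nest being a chain, the corresponding
elements would contain a strictly monotone sequence `Qₙ`. Its limit `Q` (the closed span of an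
increasing sequence, the intersection of a decreasing one) is a limit point of the nest, so the
hypothesis provides `P` on the far side of some `Qₙ` for which the compression of `a` to the
interval between `P` and `Q` has norm `< ε`. That interval contains the atom of `Qₙ`, and
compressing further to a subprojection does not increase the norm.
-/

theorem IsChain.exists_strictMono_or_strictAnti_of_infinite {α : Type*} [PartialOrder α]
    {s : Set α} (hs : IsChain (· ≤ ·) s) (hinf : s.Infinite) :
    ∃ f : ℕ → α, (∀ n, f n ∈ s) ∧ (StrictMono f ∨ StrictAnti f) := by
  classical
  let := hs.linearOrder
  have := hinf.to_subtype
  obtain ⟨f, hf⟩ := Infinite.exists_strictMono_or_strictAnti s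
  exact ⟨fun n => f n, fun n => (f n).2,
    hf.imp (Subtype.strictMono_coe _).comp (Subtype.strictMono_coe _).comp_strictAnti⟩

theorem norm_mul_mul_le_of_absorbs {R : Type*} [NonUnitalSeminormedRing R] {A B : R} (x : R)
    (hAB : A * B = A) (hBA : B * A = A) (hA : ‖A‖ ≤ 1) : ‖A * x * A‖ ≤ ‖B * x * B‖ :=
  calc ‖A * x * A‖ = ‖A * (B * x * B) * A‖ := by
        rw [← mul_assoc, ← mul_assoc, hAB, mul_assoc _ B, hBA]
    _ ≤ ‖A‖ * ‖B * x * B‖ * ‖A‖ := (norm_mul_le _ _).trans (by gcongr; exact norm_mul_le _ _)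
    _ ≤ 1 * ‖B * x * B‖ * 1 := by gcongr
    _ = ‖B * x * B‖ := by ring

section subProj

variable {M N : Submodule ℂ H} (hM : IsClosed (M : Set H)) (hN : IsClosed (N : Set H))

theorem subProj_mul_subProj_of_le (h : M ≤ N) : subProj M hM * subProj N hN = subProj M hM := by
  have := hM.completeSpace_coe
  have := hN.completeSpace_coe
  exact Submodule.starProjection_comp_starProjection_of_le h

theorem subProj_mul_subProj_of_ge (h : N ≤ M) : subProj M hM * subProj N hN = subProj N hN := by
  have := hM.completeSpace_coe
  have := hN.completeSpace_coe
  ext x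
  exact Submodule.starProjection_eq_self_iff.mpr (h (N.starProjection_apply_mem x))

theorem one_sub_subProj : 1 - subProj N hN = subProj Nᗮ N.isClosed_orthogonal := by
  have := hN.completeSpace_coe
  exact (N.starProjection_orthogonal').symm

theorem norm_subProj_le_one : ‖subProj N hN‖ ≤ 1 := by
  have := hN.completeSpace_coe
  exact N.starProjection_norm_le

theorem subProj_mul_one_sub_subProj_of_le (h : M ≤ N) :
    subProj N hN * (1 - subProj M hM) = subProj N hN - subProj M hM := by
  rw [mul_sub, mul_one, subProj_mul_subProj_of_ge hN hM h]

theorem one_sub_subProj_mul_subProj_of_le (h : M ≤ N) :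
    (1 - subProj M hM) * subProj N hN = subProj N hN - subProj M hM := by
  rw [sub_mul, one_mul, subProj_mul_subProj_of_le hM hN h]

theorem norm_subProj_sub_subProj_le_one (h : M ≤ N) : ‖subProj N hN - subProj M hM‖ ≤ 1 := by
  rw [← subProj_mul_one_sub_subProj_of_le hM hN h, one_sub_subProj]
  exact (norm_mul_le _ _).trans
    (mul_le_one₀ (norm_subProj_le_one _) (norm_nonneg _) (norm_subProj_le_one _))

end subProj

theorem norm_compression_le_of_le {X R Q Y : Submodule ℂ H} (hX : IsClosed (X : Set H))
    (hR : IsClosed (R : Set H)) (hQ : IsClosed (Q : Set H)) (hY : IsClosed (Y : Set H))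
    (hXR : X ≤ R) (hRQ : R ≤ Q) (hQY : Q ≤ Y) (a : H →L[ℂ] H) :
    ‖(subProj Q hQ - subProj R hR) * a * (subProj Q hQ - subProj R hR)‖ ≤
      ‖(subProj Y hY - subProj X hX) * a * (subProj Y hY - subProj X hX)‖ := by
  refine norm_mul_mul_le_of_absorbs a ?_ ?_ (norm_subProj_sub_subProj_le_one hR hQ hRQ)
  · simp only [sub_mul, mul_sub, subProj_mul_subProj_of_le hQ hY hQY,
      subProj_mul_subProj_of_ge hQ hX (hXR.trans hRQ), subProj_mul_subProj_of_le hR hY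
      (hRQ.trans hQY), subProj_mul_subProj_of_ge hR hX hXR]
    abel
  · simp only [sub_mul, mul_sub, subProj_mul_subProj_of_ge hY hQ hQY,
      subProj_mul_subProj_of_ge hY hR (hRQ.trans hQY), subProj_mul_subProj_of_le hX hQ
      (hXR.trans hRQ), subProj_mul_subProj_of_le hX hR hXR]
    abel

namespace Nest

variable (𝒩 : Nest H)

theorem isChain : IsChain (· ≤ ·) 𝒩.carrier := fun N hN M hM _ => 𝒩.total N hN M hM

theorem pred_le {Q : Submodule ℂ H} (hQ : IsClosed (Q : Set H)) : 𝒩.pred Q ≤ Q :=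
  Submodule.topologicalClosure_minimal _ (sSup_le fun _ hP => hP.2.le) hQ

theorem le_pred_of_lt {P Q : Submodule ℂ H} (hP : P ∈ 𝒩.carrier) (h : P < Q) : P ≤ 𝒩.pred Q :=
  (le_sSup (show P ∈ {N | N ∈ 𝒩.carrier ∧ N < Q} from ⟨hP, h⟩)).trans
    (Submodule.le_topologicalClosure _)

theorem atomProj_eq_sub {Q : Submodule ℂ H} (hQ : Q ∈ 𝒩.carrier) :
    𝒩.atomProj Q hQ = subProj Q (𝒩.isClosed Q hQ) -
      subProj (𝒩.pred Q) (Submodule.isClosed_topologicalClosure _) :=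
  subProj_mul_one_sub_subProj_of_le _ _ (𝒩.pred_le (𝒩.isClosed Q hQ))

theorem norm_atom_compression_le {X Q Y : Submodule ℂ H} (hX : IsClosed (X : Set H))
    (hQ : Q ∈ 𝒩.carrier) (hY : IsClosed (Y : Set H)) (hXQ : X ≤ 𝒩.pred Q) (hQY : Q ≤ Y)
    (a : H →L[ℂ] H) :
    ‖𝒩.atomProj Q hQ * a * 𝒩.atomProj Q hQ‖ ≤
      ‖(subProj Y hY - subProj X hX) * a * (subProj Y hY - subProj X hX)‖ := by
  rw [atomProj_eq_sub]
  exact norm_compression_le_of_le _ _ _ _ hXQ (𝒩.pred_le (𝒩.isClosed Q hQ)) hQY a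

theorem exists_lt_of_lt_closure_sSup {S : Set (Submodule ℂ H)} (hS : S ⊆ 𝒩.carrier)
    {P : Submodule ℂ H} (hP : P ∈ 𝒩.carrier) (h : P < (sSup S).topologicalClosure) :
    ∃ N ∈ S, P < N := by
  by_contra! hle
  have hNP : ∀ N ∈ S, N ≤ P := fun N hN => 𝒩.isChain.le_of_not_gt hP (hS hN) (hle N hN)
  exact h.not_ge (Submodule.topologicalClosure_minimal _ (sSup_le hNP) (𝒩.isClosed P hP))

theorem exists_lt_of_sInf_lt {S : Set (Submodule ℂ H)} (hS : S ⊆ 𝒩.carrier)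
    {P : Submodule ℂ H} (hP : P ∈ 𝒩.carrier) (h : sInf S < P) : ∃ N ∈ S, N < P := by
  by_contra! hle
  have hPN : ∀ N ∈ S, P ≤ N := fun N hN => 𝒩.isChain.le_of_not_gt (hS hN) hP (hle N hN)
  exact h.not_ge (le_sInf hPN)

theorem pred_closure_sSup_eq {S : Set (Submodule ℂ H)} (hS : S ⊆ 𝒩.carrier)
    (hlt : ∀ N ∈ S, N < (sSup S).topologicalClosure) :
    𝒩.pred (sSup S).topologicalClosure = (sSup S).topologicalClosure :=
  le_antisymm (𝒩.pred_le (Submodule.isClosed_topologicalClosure _))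
    (Submodule.topologicalClosure_mono (sSup_le_sSup fun N hN => ⟨hS hN, hlt N hN⟩))

theorem succ_sInf_eq {S : Set (Submodule ℂ H)} (hS : S ⊆ 𝒩.carrier)
    (hlt : ∀ N ∈ S, sInf S < N) : 𝒩.succ (sInf S) = sInf S :=
  le_antisymm (sInf_le_sInf fun N hN => ⟨hS hN, hlt N hN⟩) (le_sInf fun _ hP => hP.2.le)

def CompressionsVanishAtLeftLimits (a : H →L[ℂ] H) : Prop :=
  ∀ Q, ∀ hQ : Q ∈ 𝒩.carrier, Q ≠ ⊥ → 𝒩.pred Q = Q →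
    sInf {r : ℝ | ∃ P, ∃ hP : P ∈ 𝒩.carrier, P < Q ∧
        r = ‖(𝒩.proj Q hQ * (1 - 𝒩.proj P hP)) * a * (𝒩.proj Q hQ * (1 - 𝒩.proj P hP))‖} = 0

def CompressionsVanishAtRightLimits (a : H →L[ℂ] H) : Prop :=
  ∀ Q, ∀ hQ : Q ∈ 𝒩.carrier, Q ≠ ⊤ → 𝒩.succ Q = Q →
    sInf {r : ℝ | ∃ P, ∃ hP : P ∈ 𝒩.carrier, Q < P ∧
        r = ‖((1 - 𝒩.proj Q hQ) * 𝒩.proj P hP) * a * ((1 - 𝒩.proj Q hQ) * 𝒩.proj P hP)‖} = 0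

variable {𝒩} {a : H →L[ℂ] H} {f : ℕ → Submodule ℂ H}

theorem exists_norm_atom_compression_lt_of_strictMono
    (ha : 𝒩.CompressionsVanishAtLeftLimits a) (hf : StrictMono f)
    (hmem : ∀ n, f n ∈ 𝒩.carrier) {ε : ℝ} (hε : 0 < ε) :
    ∃ n, ‖𝒩.atomProj (f n) (hmem n) * a * 𝒩.atomProj (f n) (hmem n)‖ < ε := by
  set Q := (sSup (Set.range f)).topologicalClosure
  have hS : Set.range f ⊆ 𝒩.carrier := Set.range_subset_iff.2 hmem
  have hQ : Q ∈ 𝒩.carrier := 𝒩.closedSpan_mem _ hS (Set.range_nonempty f)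
  have hlt : ∀ n, f n < Q := fun n => (hf n.lt_succ_self).trans_le
    ((le_sSup (Set.mem_range_self (n + 1))).trans (Submodule.le_topologicalClosure _))
  have hpred : 𝒩.pred Q = Q := 𝒩.pred_closure_sSup_eq hS (Set.forall_mem_range.2 hlt)
  have hlimit := (ha Q hQ (hlt 0).ne_bot hpred).trans_lt hε
  obtain ⟨_, ⟨P, hP, hPQ, rfl⟩, hsmall⟩ := exists_lt_of_csInf_lt
    (by exact ⟨_, f 0, hmem 0, hlt 0, rfl⟩) hlimit
  obtain ⟨_, ⟨n, rfl⟩, hPn⟩ := 𝒩.exists_lt_of_lt_closure_sSup hS hP hPQ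
  simp only [proj, subProj_mul_one_sub_subProj_of_le _ _ hPQ.le] at hsmall
  exact ⟨n, (𝒩.norm_atom_compression_le _ (hmem n) _ (𝒩.le_pred_of_lt hP hPn) (hlt n).le
    a).trans_lt hsmall⟩

theorem exists_norm_atom_compression_lt_of_strictAnti
    (ha : 𝒩.CompressionsVanishAtRightLimits a) (hf : StrictAnti f)
    (hmem : ∀ n, f n ∈ 𝒩.carrier) {ε : ℝ} (hε : 0 < ε) :
    ∃ n, ‖𝒩.atomProj (f n) (hmem n) * a * 𝒩.atomProj (f n) (hmem n)‖ < ε := by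
  set Q := sInf (Set.range f)
  have hS : Set.range f ⊆ 𝒩.carrier := Set.range_subset_iff.2 hmem
  have hQ : Q ∈ 𝒩.carrier := 𝒩.sInf_mem _ hS (Set.range_nonempty f)
  have hlt : ∀ n, Q < f n := fun n =>
    (sInf_le (Set.mem_range_self (n + 1))).trans_lt (hf n.lt_succ_self)
  have hsucc : 𝒩.succ Q = Q := 𝒩.succ_sInf_eq hS (Set.forall_mem_range.2 hlt)
  have hlimit := (ha Q hQ (hlt 0).ne_top hsucc).trans_lt hε
  obtain ⟨_, ⟨P, hP, hQP, rfl⟩, hsmall⟩ := exists_lt_of_csInf_lt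
    (by exact ⟨_, f 0, hmem 0, hlt 0, rfl⟩) hlimit
  obtain ⟨_, ⟨n, rfl⟩, hnP⟩ := 𝒩.exists_lt_of_sInf_lt hS hP hQP
  simp only [proj, one_sub_subProj_mul_subProj_of_le _ _ hQP.le] at hsmall
  exact ⟨n, (𝒩.norm_atom_compression_le _ (hmem n) _
    (𝒩.le_pred_of_lt hQ (hlt (n + 1) |>.trans (hf n.lt_succ_self))) hnP.le a).trans_lt hsmall⟩

end Nest

theorem nest_atoms_finite_general (𝒩 : Nest H)
    (a : H →L[ℂ] H)
    (h₁ : ∀ Q, ∀ hQ : Q ∈ 𝒩.carrier, Q ≠ ⊥ → 𝒩.pred Q = Q →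
      sInf {r : ℝ | ∃ P, ∃ hP : P ∈ 𝒩.carrier, P < Q ∧
          r = ‖(𝒩.proj Q hQ * (1 - 𝒩.proj P hP)) * a *
              (𝒩.proj Q hQ * (1 - 𝒩.proj P hP))‖} = 0)
    (h₂ : ∀ Q, ∀ hQ : Q ∈ 𝒩.carrier, Q ≠ ⊤ → 𝒩.succ Q = Q →
      sInf {r : ℝ | ∃ P, ∃ hP : P ∈ 𝒩.carrier, Q < P ∧
          r = ‖((1 - 𝒩.proj Q hQ) * 𝒩.proj P hP) * a *
              ((1 - 𝒩.proj Q hQ) * 𝒩.proj P hP)‖} = 0)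
    (ε : ℝ) (hε : 0 < ε) :
    {Q : Submodule ℂ H | ∃ hQ : Q ∈ 𝒩.carrier,
      ε < ‖𝒩.atomProj Q hQ * a * 𝒩.atomProj Q hQ‖}.Finite := by
  by_contra hinf
  obtain ⟨f, hfS, hf⟩ :=
    (𝒩.isChain.mono fun Q hQ => hQ.1).exists_strictMono_or_strictAnti_of_infinite hinf
  have hmem : ∀ n, f n ∈ 𝒩.carrier := fun n => (hfS n).1
  obtain ⟨n, hn⟩ := hf.elim (Nest.exists_norm_atom_compression_lt_of_strictMono h₁ · hmem hε)
    (Nest.exists_norm_atom_compression_lt_of_strictAnti h₂ · hmem hε)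
  exact lt_asymm (hfS n).2 hn

/-- If the Ringrose criteria hold at every limit point of the nest, then for every `ε > 0`
only finitely many atoms `Q Q₋^⊥` satisfy `‖Q Q₋^⊥ a Q Q₋^⊥‖ > ε`. -/
theorem nest_atoms_finite [TopologicalSpace.SeparableSpace H] (𝒩 : Nest H)
    (a : H →L[ℂ] H) (ha : a ∈ nestAlgebra 𝒩)
    (h₁ : ∀ Q, ∀ hQ : Q ∈ 𝒩.carrier, Q ≠ ⊥ → 𝒩.pred Q = Q →
      sInf {r : ℝ | ∃ P, ∃ hP : P ∈ 𝒩.carrier, P < Q ∧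
          r = ‖(𝒩.proj Q hQ * (1 - 𝒩.proj P hP)) * a *
              (𝒩.proj Q hQ * (1 - 𝒩.proj P hP))‖} = 0)
    (h₂ : ∀ Q, ∀ hQ : Q ∈ 𝒩.carrier, Q ≠ ⊤ → 𝒩.succ Q = Q →
      sInf {r : ℝ | ∃ P, ∃ hP : P ∈ 𝒩.carrier, Q < P ∧
          r = ‖((1 - 𝒩.proj Q hQ) * 𝒩.proj P hP) * a *
              ((1 - 𝒩.proj Q hQ) * 𝒩.proj P hP)‖} = 0)
    (ε : ℝ) (hε : 0 < ε) :
    {Q : Submodule ℂ H | ∃ hQ : Q ∈ 𝒩.carrier,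
      ε < ‖𝒩.atomProj Q hQ * a * 𝒩.atomProj Q hQ‖}.Finite :=
  nest_atoms_finite_general 𝒩 a h₁ h₂ ε hε
end

section
/- Let 𝒩 be a nest on a complex Hilbert space H, let Q ∈ 𝒩 with Q_- < Q, and set E = Q Q_-^⊥ (the atom projection). Then for every x ∈ B(H) with x = E x E (any such x lies in Alg 𝒩): inf{‖x + K‖ : K a compact operator with K = E K E} = inf{‖x + k + r‖ : k ∈ K(𝒩), r ∈ Rad(Alg 𝒩)}. (In other words, the natural map B(E H)/K(E H) → B(E H)/(closure of K(𝒩)+Rad(Alg 𝒩)) is isometric.) -/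
open scoped InnerProductSpace

set_option synthInstance.maxHeartbeats 1000000
set_option maxHeartbeats 1000000

variable {H : Type*} [NormedAddCommGroup H] [InnerProductSpace ℂ H] [CompleteSpace H]

/-
Write `E = Q - Q₋` for the atom. Compression `T ↦ E T E` maps `B(H)` onto operators supported on
the atom, all of which lie in `Alg 𝒩`, and it is multiplicative on `Alg 𝒩` because `Q₋` is
invariant and killed by `E`. Hence the compression of a radical element `w` is quasi-invertible
against every operator `b` supported on the atom; taking `b` of rank one with `b (E w E u) = u`
forces `E w E = 0`. So compressing `x + k + w` gives `x + E k E`, with `E k E` compact and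
supported on the atom, at no larger norm; conversely every compact `K = E K E` lies in `K(𝒩)`.
-/

theorem IsStarProjection.norm_mul_mul_le {R : Type*} [NormedRing R] [StarRing R] [CStarRing R]
    {e : R} (he : IsStarProjection e) (y : R) : ‖e * y * e‖ ≤ ‖y‖ :=
  calc ‖e * y * e‖ ≤ ‖e‖ * ‖y‖ * ‖e‖ := norm_mul₃_le
    _ ≤ 1 * ‖y‖ * 1 := by gcongr <;> exact he.norm_le
    _ = ‖y‖ := by ring

theorem IsCompactOperator.mul_mul {𝕜 E : Type*} [NontriviallyNormedField 𝕜]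
    [NormedAddCommGroup E] [NormedSpace 𝕜 E] {k : E →L[𝕜] E} (hk : IsCompactOperator k)
    (a b : E →L[𝕜] E) :
    IsCompactOperator (a * k * b) :=
  (hk.comp_clm b).clm_comp a

theorem Subalgebra.exists_mul_compression_eq_of_mem_jacobson {R A : Type*} [CommRing R] [Ring A]
    [Algebra R A] {S : Subalgebra R A} {e : A} (he : IsIdempotentElem e)
    (hS : ∀ x, e * x * e ∈ S)
    (hmul : ∀ a ∈ S, ∀ b ∈ S, e * (a * b) * e = e * a * e * (e * b * e))
    {w : S} (hw : w ∈ (⊥ : TwoSidedIdeal S).jacobson) (b : A) :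
    ∃ z : A, z * (e - e * b * e * (e * w * e)) = e := by
  obtain ⟨z, hz⟩ := TwoSidedIdeal.mem_jacobson_iff.mp hw (-⟨e * b * e, hS b⟩)
  have hz : (z : A) * (1 - e * b * e * w) = 1 := by
    have h0 := congrArg Subtype.val (sub_eq_zero.mp ((TwoSidedIdeal.mem_bot _).mp hz))
    push_cast at h0
    calc (z : A) * (1 - e * b * e * w) = z * -(e * b * e) * w + z := by noncomm_ring
      _ = 1 := h0
  have hone : 1 - e * b * e * w ∈ S := sub_mem (one_mem S) (mul_mem (hS b) w.2)
  have hcomp : e * (e * b * e * w) * e = e * b * e * (e * w * e) := by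
    rw [hmul _ (hS b) _ w.2]
    simp only [mul_assoc, he.mul_self_mul]
  refine ⟨e * z * e, ?_⟩
  calc e * z * e * (e - e * b * e * (e * w * e))
      = e * z * e * (e * (1 - e * b * e * w) * e) := by
        congr 1
        rw [mul_sub, mul_one, sub_mul, he.eq, hcomp]
    _ = e := by rw [← hmul _ z.2 _ hone, hz, mul_one, he.eq]

theorem rankOne_apply_s8 {F : Type*} [NormedAddCommGroup F] [InnerProductSpace ℂ F] (e f h : F) :
    rankOne e f h = ⟪e, h⟫_ℂ • f :=
  rfl

/-- A rank one `b` sending `E t E u` back to `E u` makes `E - E b E (E t E)` kill `E u`. -/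
theorem eq_zero_of_forall_exists_mul_compression_eq {F : Type*} [NormedAddCommGroup F]
    [InnerProductSpace ℂ F] {E t : F →L[ℂ] F} (hE : IsIdempotentElem E)
    (ht : ∀ b : F →L[ℂ] F, ∃ z, z * (E - E * b * E * (E * t * E)) = E) :
    E * t * E = 0 := by
  have hEE : ∀ v, E (E v) = E v := fun v => congrArg (· v) hE.eq
  by_contra hne
  obtain ⟨u₀, hv⟩ : ∃ u₀, (E * t * E) u₀ ≠ 0 := by
    by_contra! h
    exact hne (ContinuousLinearMap.ext h)
  set u := E u₀
  set v := (E * t * E) u₀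
  have hvu : (E * t * E) u = v := by simp only [u, v, mul_apply_eq_comp, hEE]
  set b := (⟪v, v⟫_ℂ)⁻¹ • rankOne v u
  have hbv : (E * b * E) v = u := by
    have hEv : E v = v := hEE _
    have hvv : (⟪v, v⟫_ℂ)⁻¹ * ⟪v, v⟫_ℂ = 1 := inv_mul_cancel₀ (inner_self_ne_zero.mpr hv)
    simp only [b, mul_apply_eq_comp, smul_apply, rankOne_apply_s8, hEv, smul_smul, hvv, one_smul, u,
      hEE]
  have hEu : E u = u := hEE u₀
  obtain ⟨z, hz⟩ := ht b
  have hu : u = 0 := by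
    have := congrArg (· u) hz
    simp only [mul_apply_eq_comp, sub_apply, hvu, hbv, hEu, sub_self, map_zero] at this
    exact this.symm
  exact hv (by rw [← hvu, hu, map_zero])

theorem isStarProjection_subProj (N : Submodule ℂ H) (hN : IsClosed (N : Set H)) :
    IsStarProjection (subProj N hN) :=
  haveI : CompleteSpace N := hN.completeSpace_coe
  isStarProjection_starProjection

theorem subProj_apply_mem (N : Submodule ℂ H) (hN : IsClosed (N : Set H)) (v : H) :
    subProj N hN v ∈ N :=
  haveI : CompleteSpace N := hN.completeSpace_coe
  N.starProjection_apply_mem v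

theorem subProj_apply_eq_self_iff (N : Submodule ℂ H) (hN : IsClosed (N : Set H)) {v : H} :
    subProj N hN v = v ↔ v ∈ N :=
  haveI : CompleteSpace N := hN.completeSpace_coe
  N.starProjection_eq_self_iff

namespace Nest

variable (𝒩 : Nest H) {Q : Submodule ℂ H}

theorem pred_le_s8 (hQ : Q ∈ 𝒩.carrier) : 𝒩.pred Q ≤ Q :=
  Submodule.topologicalClosure_minimal _ (sSup_le fun _ hP => hP.2.le) (𝒩.isClosed Q hQ)

theorem pred_mem (Q : Submodule ℂ H) : 𝒩.pred Q ∈ 𝒩.carrier := by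
  rcases Set.eq_empty_or_nonempty {P | P ∈ 𝒩.carrier ∧ P < Q} with hempty | hne
  · have : 𝒩.pred Q = ⊥ := le_bot_iff.mp <| Submodule.topologicalClosure_minimal _
      (by rw [hempty, sSup_empty]) (𝒩.isClosed ⊥ 𝒩.bot_mem)
    exact this ▸ 𝒩.bot_mem
  · exact 𝒩.closedSpan_mem _ (fun _ hP => hP.1) hne

variable (hQ : Q ∈ 𝒩.carrier)

theorem proj_apply_mem (v : H) : 𝒩.proj Q hQ v ∈ Q := subProj_apply_mem _ _ v

theorem predProj_apply_mem (v : H) : 𝒩.predProj Q v ∈ 𝒩.pred Q := subProj_apply_mem _ _ v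

theorem proj_apply_of_mem {v : H} (hv : v ∈ Q) : 𝒩.proj Q hQ v = v :=
  (subProj_apply_eq_self_iff Q _).mpr hv

theorem predProj_apply_of_mem {v : H} (hv : v ∈ 𝒩.pred Q) : 𝒩.predProj Q v = v :=
  (subProj_apply_eq_self_iff (𝒩.pred Q) _).mpr hv

theorem proj_mul_predProj : 𝒩.proj Q hQ * 𝒩.predProj Q = 𝒩.predProj Q := by
  ext v
  exact 𝒩.proj_apply_of_mem hQ (𝒩.pred_le_s8 hQ (𝒩.predProj_apply_mem v))

theorem atomProj_eq_sub_s8 : 𝒩.atomProj Q hQ = 𝒩.proj Q hQ - 𝒩.predProj Q := by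
  rw [atomProj, mul_sub, mul_one, proj_mul_predProj]

theorem isStarProjection_atomProj : IsStarProjection (𝒩.atomProj Q hQ) := by
  rw [atomProj_eq_sub_s8]
  exact (isStarProjection_subProj _ _).sub_of_mul_eq_right (isStarProjection_subProj _ _)
    (𝒩.proj_mul_predProj hQ)

theorem atomProj_apply_mem (v : H) : 𝒩.atomProj Q hQ v ∈ Q := by
  rw [atomProj_eq_sub_s8]
  exact Q.sub_mem (𝒩.proj_apply_mem hQ v) (𝒩.pred_le_s8 hQ (𝒩.predProj_apply_mem v))

theorem atomProj_apply_of_mem_pred {v : H} (hv : v ∈ 𝒩.pred Q) : 𝒩.atomProj Q hQ v = 0 := by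
  rw [atomProj_eq_sub_s8, sub_apply, 𝒩.predProj_apply_of_mem hv,
    𝒩.proj_apply_of_mem hQ (𝒩.pred_le_s8 hQ hv), sub_self]

theorem sub_atomProj_apply_mem_pred {v : H} (hv : v ∈ Q) :
    v - 𝒩.atomProj Q hQ v ∈ 𝒩.pred Q := by
  rw [atomProj_eq_sub_s8, sub_apply, 𝒩.proj_apply_of_mem hQ hv, sub_sub_cancel]
  exact 𝒩.predProj_apply_mem v

theorem atomProj_mul_mul_mem_nestAlgebra (T : H →L[ℂ] H) :
    𝒩.atomProj Q hQ * T * 𝒩.atomProj Q hQ ∈ nestAlgebra 𝒩 := by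
  intro N hN v hv
  rcases 𝒩.total N hN Q hQ with hNQ | hQN
  · rcases hNQ.lt_or_eq with hlt | rfl
    · have hv : v ∈ 𝒩.pred Q :=
        have hN : N ∈ {P | P ∈ 𝒩.carrier ∧ P < Q} := ⟨hN, hlt⟩
        Submodule.le_topologicalClosure _ (le_sSup hN hv)
      simp [atomProj_apply_of_mem_pred 𝒩 hQ hv]
    · exact atomProj_apply_mem 𝒩 hQ _
  · exact hQN (atomProj_apply_mem 𝒩 hQ _)

/-- `E a (1 - E) b E = 0`, since `(1 - E) b E` lands in the invariant subspace `Q₋`, which `E`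
annihilates. -/
theorem atomProj_mul_mul_atomProj {a b : H →L[ℂ] H} (ha : a ∈ nestAlgebra 𝒩)
    (hb : b ∈ nestAlgebra 𝒩) :
    𝒩.atomProj Q hQ * (a * b) * 𝒩.atomProj Q hQ =
      𝒩.atomProj Q hQ * a * 𝒩.atomProj Q hQ * (𝒩.atomProj Q hQ * b * 𝒩.atomProj Q hQ) := by
  set E := 𝒩.atomProj Q hQ
  have hEE : ∀ v, E (E v) = E v :=
    fun v => congrArg (· v) (𝒩.isStarProjection_atomProj hQ).isIdempotentElem.eq
  ext v
  have hu : b (E v) ∈ Q := hb Q hQ _ (atomProj_apply_mem 𝒩 hQ v)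
  have hkill : E (a (b (E v) - E (b (E v)))) = 0 := atomProj_apply_of_mem_pred 𝒩 hQ
    (ha _ (𝒩.pred_mem Q) _ (sub_atomProj_apply_mem_pred 𝒩 hQ hu))
  rw [map_sub, map_sub, sub_eq_zero] at hkill
  simpa only [mul_apply_eq_comp, hEE] using hkill

theorem atomProj_mul_mul_eq_zero_of_mem_nestRadical {w : H →L[ℂ] H}
    (hw : w ∈ nestRadical 𝒩) : 𝒩.atomProj Q hQ * w * 𝒩.atomProj Q hQ = 0 := by
  obtain ⟨w, hw, rfl⟩ := hw
  have hE := (𝒩.isStarProjection_atomProj hQ).isIdempotentElem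
  exact eq_zero_of_forall_exists_mul_compression_eq hE
    (Subalgebra.exists_mul_compression_eq_of_mem_jacobson hE (𝒩.atomProj_mul_mul_mem_nestAlgebra hQ)
      (fun _ ha _ hb => 𝒩.atomProj_mul_mul_atomProj hQ ha hb) hw)

end Nest

theorem zero_mem_nestRadical (𝒩 : Nest H) : (0 : H →L[ℂ] H) ∈ nestRadical 𝒩 :=
  ⟨0, show (0 : nestAlgebra 𝒩) ∈ (⊥ : TwoSidedIdeal _).jacobson from zero_mem _, rfl⟩

theorem nest_atom_quotient_isometric_general (𝒩 : Nest H) (Q : Submodule ℂ H) (hQ : Q ∈ 𝒩.carrier)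
    (x : H →L[ℂ] H)
    (hx : x = 𝒩.atomProj Q hQ * x * 𝒩.atomProj Q hQ) :
    sInf {r : ℝ | ∃ K : H →L[ℂ] H, IsCompactOperator K ∧
        K = 𝒩.atomProj Q hQ * K * 𝒩.atomProj Q hQ ∧ r = ‖x + K‖} =
      sInf {r : ℝ | ∃ k ∈ nestCompacts 𝒩, ∃ w ∈ nestRadical 𝒩, r = ‖x + k + w‖} := by
  set E := 𝒩.atomProj Q hQ
  have hE : IsStarProjection E := 𝒩.isStarProjection_atomProj hQ
  have h0 : (0 : H →L[ℂ] H) ∈ nestCompacts 𝒩 := ⟨zero_mem _, isCompactOperator_zero⟩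
  apply le_antisymm
  · refine le_csInf ⟨_, 0, h0, 0, zero_mem_nestRadical 𝒩, rfl⟩ ?_
    rintro _ ⟨k, hk, w, hw, rfl⟩
    apply csInf_le_of_le (b := ‖x + E * k * E‖)
    · exact ⟨0, by rintro _ ⟨_, -, -, rfl⟩; positivity⟩
    · refine ⟨_, hk.2.mul_mul E E, ?_, rfl⟩
      simp only [mul_assoc, hE.isIdempotentElem.eq, hE.isIdempotentElem.mul_self_mul]
    · calc ‖x + E * k * E‖ = ‖E * (x + k + w) * E‖ := by
            rw [mul_add, mul_add, add_mul, add_mul, ← hx,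
              𝒩.atomProj_mul_mul_eq_zero_of_mem_nestRadical hQ hw, add_zero]
        _ ≤ ‖x + k + w‖ := hE.norm_mul_mul_le _
  · refine csInf_le_csInf ⟨0, by rintro _ ⟨_, -, _, -, rfl⟩; positivity⟩
      ⟨_, 0, isCompactOperator_zero, by simp, rfl⟩ ?_
    rintro _ ⟨K, hK, hKE, rfl⟩
    refine ⟨K, ⟨?_, hK⟩, 0, zero_mem_nestRadical 𝒩, by rw [add_zero]⟩
    exact hKE ▸ 𝒩.atomProj_mul_mul_mem_nestAlgebra hQ K

/-- For an atom `E = Q Q₋^⊥` of the nest and `x = E x E`, the distance from `x` to the compact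
operators supported on the atom equals the distance from `x` to `K(𝒩) + Rad(Alg 𝒩)`: the natural
map `B(EH)/K(EH) → B(EH)/(K(𝒩) + Rad(Alg 𝒩))⁻` is isometric. -/
theorem nest_atom_quotient_isometric (𝒩 : Nest H) (Q : Submodule ℂ H) (hQ : Q ∈ 𝒩.carrier)
    (hatom : 𝒩.pred Q < Q) (x : H →L[ℂ] H)
    (hx : x = 𝒩.atomProj Q hQ * x * 𝒩.atomProj Q hQ) :
    sInf {r : ℝ | ∃ K : H →L[ℂ] H, IsCompactOperator K ∧
        K = 𝒩.atomProj Q hQ * K * 𝒩.atomProj Q hQ ∧ r = ‖x + K‖} =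
      sInf {r : ℝ | ∃ k ∈ nestCompacts 𝒩, ∃ w ∈ nestRadical 𝒩, r = ‖x + k + w‖} :=
  nest_atom_quotient_isometric_general 𝒩 Q hQ x hx
end
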